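/- arXiv:2602.13638 — 2 statements merged into one kernel-verified Lean document; each statement's English description precedes it below -/
import Mathlib

section
/- The number of standard Young tableaux of a two-row Young diagram with r1 boxes in the first row and r2 = N - r1 boxes in the second row (r1 ≥ r2) equals binomial(N, r1) · (2·r1 − N + 1)/(r1 + 1). -/
/-- The two-row Young diagram with `r1` boxes in the first row and `r2 ≤ r1` in the second. -/
def twoRowDiagram (r1 r2 : ℕ) (h : r2 ≤ r1) : YoungDiagram :=
  YoungDiagram.ofRowLens [r1, r2] (by simp [List.sortedGE_iff_pairwise, h])

/-- `f` is a standard Young tableau of the Young diagram `μ` (with `N = μ.card` boxes):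
it fills the boxes with the integers `1,…,N` bijectively, strictly increasing along rows
and down columns, and is zero outside the diagram. -/
def IsSYT (μ : YoungDiagram) (f : ℕ × ℕ → ℕ) : Prop :=
  Set.BijOn f ↑μ.cells ↑(Finset.Icc 1 μ.card) ∧
  (∀ i j : ℕ, (i, j + 1) ∈ μ → f (i, j) < f (i, j + 1)) ∧
  (∀ i j : ℕ, (i + 1, j) ∈ μ → f (i, j) < f (i + 1, j)) ∧
  (∀ c : ℕ × ℕ, c ∉ μ → f c = 0)

/-! Removing the cell holding the largest entry of a standard Young tableau leaves a standard
Young tableau of the smaller diagram, and this cell is a corner. For two rows the corners are the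
ends of the rows, so the number `T a b` of tableaux satisfies the Pascal-type recursion
`T (a+1) (b+1) = T a (b+1) + T (a+1) b` with `T a 0 = 1` and `T a (a+1) = 0`. The difference of
binomial coefficients `C(a+b, a) - C(a+b, a+1)` satisfies the same recursion and boundary
values, and it equals `C(a+b, a) (a - b + 1) / (a + 1)`. -/

open Function

namespace YoungDiagram

variable {μ μ' : YoungDiagram} {c : ℕ × ℕ}

lemma card_eq_succ_of_cells_eq_insert (hcells : μ.cells = insert c μ'.cells) (hc : c ∉ μ') :
    μ.card = μ'.card + 1 := by
  rw [YoungDiagram.card, hcells, Finset.card_insert_of_notMem hc]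

lemma bijOn_Icc_card_iff_of_cells_eq_insert (hcells : μ.cells = insert c μ'.cells)
    (hc : c ∉ μ') {g : ℕ × ℕ → ℕ} (hg : g c = μ.card) :
    Set.BijOn g μ.cells (Finset.Icc 1 μ.card) ↔
      Set.BijOn g μ'.cells (Finset.Icc 1 μ'.card) := by
  have hcard := card_eq_succ_of_cells_eq_insert hcells hc
  rw [hcells, hcard, ← Finset.insert_Icc_right_eq_Icc_add_one (by omega), Finset.coe_insert,
    Finset.coe_insert, ← hcard, ← hg]
  exact Set.BijOn.insert_iff (by simpa using hc) (by simp [hg, hcard])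

end YoungDiagram

namespace IsSYT

variable {μ μ' : YoungDiagram} {f : ℕ × ℕ → ℕ}

lemma le_card (hf : IsSYT μ f) {x : ℕ × ℕ} (hx : x ∈ μ) : f x ≤ μ.card := by
  have := hf.1.mapsTo (by simpa using hx)
  simp only [Finset.coe_Icc, Set.mem_Icc] at this
  exact this.2

lemma exists_corner_apply_eq_card (hf : IsSYT μ f) (hμ : 0 < μ.card) :
    ∃ i j, (i, j) ∈ μ ∧ f (i, j) = μ.card ∧ (i, j + 1) ∉ μ ∧ (i + 1, j) ∉ μ := by
  have hcard : μ.card ∈ (Finset.Icc 1 μ.card : Set ℕ) := by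
    simp only [Finset.coe_Icc, Set.mem_Icc]
    omega
  obtain ⟨⟨i, j⟩, hmem, hmax⟩ := hf.1.surjOn hcard
  refine ⟨i, j, by simpa using hmem, hmax, fun hright => ?_, fun hbelow => ?_⟩
  · have := hf.2.1 i j hright
    have := hf.le_card hright
    omega
  · have := hf.2.2.1 i j hbelow
    have := hf.le_card hbelow
    omega

lemma update_of_cells_eq_insert {c : ℕ × ℕ} (hcells : μ.cells = insert c μ'.cells)
    (hc : c ∉ μ') (hf : IsSYT μ' f) : IsSYT μ (update f c μ.card) := by
  have hmem : ∀ x, x ∈ μ ↔ x = c ∨ x ∈ μ' := fun x => by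
    rw [← YoungDiagram.mem_cells, hcells, Finset.mem_insert, YoungDiagram.mem_cells]
  have hcard := YoungDiagram.card_eq_succ_of_cells_eq_insert hcells hc
  have hlt : ∀ x y, x ≤ y → x ≠ y → y ∈ μ → (y ∈ μ' → f x < f y) →
      update f c μ.card x < update f c μ.card y := by
    intro x y hxy hne hy hlt
    have hx : x ∈ μ := μ.isLowerSet hxy hy
    rcases (hmem y).1 hy with rfl | hy'
    · have := hf.le_card (((hmem x).1 hx).resolve_left hne)
      rw [update_of_ne hne, update_self]
      omega
    · have hx' : x ∈ μ' := μ'.isLowerSet hxy hy'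
      rw [update_of_ne (ne_of_mem_of_not_mem hx' hc),
        update_of_ne (ne_of_mem_of_not_mem hy' hc)]
      exact hlt hy'
  obtain ⟨hbij, hrow, hcol, hzero⟩ := hf
  refine ⟨?_,
    fun i j h => hlt _ _ (Prod.mk_le_mk.2 ⟨le_rfl, j.le_succ⟩) (by simp) h (hrow i j),
    fun i j h => hlt _ _ (Prod.mk_le_mk.2 ⟨i.le_succ, le_rfl⟩) (by simp) h (hcol i j),
    fun x hx => ?_⟩
  · rw [YoungDiagram.bijOn_Icc_card_iff_of_cells_eq_insert hcells hc (update_self ..)]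
    exact hbij.congr fun x hx => (update_of_ne (ne_of_mem_of_not_mem hx hc) _ _).symm
  · rw [not_iff_not.2 (hmem x), not_or] at hx
    rw [update_of_ne hx.1, hzero x hx.2]

lemma update_zero_of_cells_eq_insert {c : ℕ × ℕ} (hcells : μ.cells = insert c μ'.cells)
    (hc : c ∉ μ') (hf : IsSYT μ f) (hfc : f c = μ.card) : IsSYT μ' (update f c 0) := by
  obtain ⟨hbij, hrow, hcol, hzero⟩ := hf
  have hmem : ∀ x, x ∈ μ' → x ∈ μ := fun x hx => by
    rw [← YoungDiagram.mem_cells, hcells]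
    exact Finset.mem_insert_of_mem hx
  have hlt : ∀ x y, x ≤ y → y ∈ μ' → f x < f y → update f c 0 x < update f c 0 y := by
    intro x y hxy hy hlt
    rwa [update_of_ne (ne_of_mem_of_not_mem (μ'.isLowerSet hxy hy) hc),
      update_of_ne (ne_of_mem_of_not_mem hy hc)]
  refine ⟨?_,
    fun i j h => hlt _ _ (Prod.mk_le_mk.2 ⟨le_rfl, j.le_succ⟩) h (hrow i j (hmem _ h)),
    fun i j h => hlt _ _ (Prod.mk_le_mk.2 ⟨i.le_succ, le_rfl⟩) h (hcol i j (hmem _ h)),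
    fun x hx => ?_⟩
  · rw [YoungDiagram.bijOn_Icc_card_iff_of_cells_eq_insert hcells hc hfc] at hbij
    exact hbij.congr fun x hx => (update_of_ne (ne_of_mem_of_not_mem hx hc) _ _).symm
  · by_cases hxc : x = c
    · rw [hxc, update_self]
    · rw [update_of_ne hxc]
      refine hzero x fun hxμ => hx ?_
      rw [← YoungDiagram.mem_cells, hcells, Finset.mem_insert] at hxμ
      exact hxμ.resolve_left hxc

end IsSYT

theorem ncard_setOf_isSYT_apply_eq_card {μ μ' : YoungDiagram} {c : ℕ × ℕ}
    (hcells : μ.cells = insert c μ'.cells) (hc : c ∉ μ') :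
    {f | IsSYT μ f ∧ f c = μ.card}.ncard = {f | IsSYT μ' f}.ncard := by
  refine Set.ncard_congr (fun f _ => update f c 0)
    (fun f hf => hf.1.update_zero_of_cells_eq_insert hcells hc hf.2) ?_ ?_
  · intro f g hf hg hfg
    funext x
    by_cases hxc : x = c
    · rw [hxc, hf.2, hg.2]
    · simpa [hxc] using congrFun hfg x
  · intro g hg
    refine ⟨update g c μ.card,
      ⟨hg.update_of_cells_eq_insert hcells hc, update_self ..⟩, ?_⟩
    rw [update_idem, update_eq_self_iff]
    exact (hg.2.2.2 c hc).symm

theorem setOf_isSYT_finite (μ : YoungDiagram) : {f | IsSYT μ f}.Finite := by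
  refine Set.Finite.of_finite_image (f := fun f (x : μ.cells) => f x) ?_ ?_
  · refine (Set.Finite.pi fun _ => (Finset.Icc 1 μ.card).finite_toSet).subset ?_
    rintro _ ⟨f, hf, rfl⟩ x -
    exact hf.1.mapsTo x.2
  · intro f hf g hg hfg
    funext x
    by_cases hx : x ∈ μ
    · exact congrFun hfg ⟨x, hx⟩
    · rw [hf.2.2.2 x hx, hg.2.2.2 x hx]

theorem setOf_isSYT_bot : {f | IsSYT ⊥ f} = {0} := by
  ext f
  simp [IsSYT, funext_iff]

section TwoRows

variable {a b : ℕ}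

lemma mem_twoRowDiagram (h : b ≤ a) {i j : ℕ} :
    (i, j) ∈ twoRowDiagram a b h ↔ i = 0 ∧ j < a ∨ i = 1 ∧ j < b := by
  rw [twoRowDiagram, YoungDiagram.mem_ofRowLens]
  constructor
  · rintro ⟨hi, hj⟩
    simp only [List.length_cons, List.length_nil] at hi
    interval_cases i <;> simp_all
  · rintro (⟨rfl, hj⟩ | ⟨rfl, hj⟩) <;> exact ⟨by simp, by simpa⟩

lemma twoRowDiagram_zero_zero : twoRowDiagram 0 0 le_rfl = ⊥ := by
  ext ⟨i, j⟩
  simp [mem_twoRowDiagram]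

lemma twoRowDiagram_cells_succ_left (h : b ≤ a + 1) (h' : b ≤ a) :
    (twoRowDiagram (a + 1) b h).cells = insert (0, a) (twoRowDiagram a b h').cells := by
  ext ⟨i, j⟩
  simp only [Finset.mem_insert, YoungDiagram.mem_cells, mem_twoRowDiagram, Prod.mk.injEq]
  omega

lemma twoRowDiagram_cells_succ_right (h : b + 1 ≤ a) (h' : b ≤ a) :
    (twoRowDiagram a (b + 1) h).cells = insert (1, b) (twoRowDiagram a b h').cells := by
  ext ⟨i, j⟩
  simp only [Finset.mem_insert, YoungDiagram.mem_cells, mem_twoRowDiagram, Prod.mk.injEq]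
  omega

/-- Taken to be empty when `a < b`, which supplies the boundary value `T a (a + 1) = 0`. -/
def twoRowSYT (a b : ℕ) : Set (ℕ × ℕ → ℕ) :=
  {f | ∃ h : b ≤ a, IsSYT (twoRowDiagram a b h) f}

lemma IsSYT.twoRow_apply_row_end_eq_card {h : b ≤ a + 1} {f : ℕ × ℕ → ℕ}
    (hf : IsSYT (twoRowDiagram (a + 1) b h) f) :
    f (0, a) = (twoRowDiagram (a + 1) b h).card ∨
      ∃ j, j + 1 = b ∧ f (1, j) = (twoRowDiagram (a + 1) b h).card := by
  obtain ⟨i, j, hmem, hfij, hright, -⟩ :=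
    hf.exists_corner_apply_eq_card (Finset.card_pos.2 ⟨(0, 0), by simp [mem_twoRowDiagram]⟩)
  simp only [mem_twoRowDiagram] at hmem hright
  rcases hmem with ⟨rfl, hj⟩ | ⟨rfl, hj⟩
  · obtain rfl : j = a := by omega
    exact Or.inl hfij
  · exact Or.inr ⟨j, by omega, hfij⟩

lemma twoRowSYT_eq (h : b ≤ a) : twoRowSYT a b = {f | IsSYT (twoRowDiagram a b h) f} := by
  ext f
  exact ⟨fun ⟨_, hf⟩ => hf, fun hf => ⟨h, hf⟩⟩

lemma twoRowSYT_eq_empty (h : a < b) : twoRowSYT a b = ∅ := by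
  ext f
  simp [twoRowSYT, h.not_ge]

lemma twoRowSYT_zero_zero : twoRowSYT 0 0 = {0} := by
  rw [twoRowSYT_eq le_rfl, twoRowDiagram_zero_zero, setOf_isSYT_bot]

lemma ncard_twoRowSYT_succ_zero : (twoRowSYT (a + 1) 0).ncard = (twoRowSYT a 0).ncard := by
  set μ := twoRowDiagram (a + 1) 0 (Nat.zero_le _)
  have hmax : {f | IsSYT μ f} = {f | IsSYT μ f ∧ f (0, a) = μ.card} := by
    ext f
    refine ⟨fun hf => ⟨hf, ?_⟩, And.left⟩
    obtain h0 | ⟨j, hj, -⟩ := hf.twoRow_apply_row_end_eq_card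
    exacts [h0, absurd hj j.succ_ne_zero]
  rw [twoRowSYT_eq (Nat.zero_le _), twoRowSYT_eq (Nat.zero_le _), hmax,
    ncard_setOf_isSYT_apply_eq_card (twoRowDiagram_cells_succ_left _ (Nat.zero_le _))
      (by simp [mem_twoRowDiagram])]

lemma ncard_twoRowSYT_succ_succ (h : b + 1 ≤ a + 1) :
    (twoRowSYT (a + 1) (b + 1)).ncard =
      (twoRowSYT a (b + 1)).ncard + (twoRowSYT (a + 1) b).ncard := by
  set μ := twoRowDiagram (a + 1) (b + 1) h
  have hmem0 : (0, a) ∈ μ := by simp [μ, mem_twoRowDiagram]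
  have hmem1 : (1, b) ∈ μ := by simp [μ, mem_twoRowDiagram]
  have hsplit : {f | IsSYT μ f} =
      {f | IsSYT μ f ∧ f (0, a) = μ.card} ∪ {f | IsSYT μ f ∧ f (1, b) = μ.card} := by
    ext f
    refine ⟨fun hf => ?_, by rintro (⟨hf, -⟩ | ⟨hf, -⟩) <;> exact hf⟩
    obtain h0 | ⟨j, hj, h1⟩ := hf.twoRow_apply_row_end_eq_card
    · exact Or.inl ⟨hf, h0⟩
    · obtain rfl : j = b := Nat.succ_injective hj
      exact Or.inr ⟨hf, h1⟩
  have hdisj :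
      Disjoint {f | IsSYT μ f ∧ f (0, a) = μ.card} {f | IsSYT μ f ∧ f (1, b) = μ.card} := by
    refine Set.disjoint_left.2 fun f ⟨hf, h0⟩ ⟨_, h1⟩ => ?_
    have := hf.1.injOn (by simpa using hmem0) (by simpa using hmem1) (h0.trans h1.symm)
    simp at this
  have hfin := setOf_isSYT_finite μ
  have htop : {f | IsSYT μ f ∧ f (0, a) = μ.card}.ncard = (twoRowSYT a (b + 1)).ncard := by
    rcases (Nat.le_of_succ_le_succ h).lt_or_eq with hlt | rfl
    · rw [twoRowSYT_eq hlt,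
        ncard_setOf_isSYT_apply_eq_card (twoRowDiagram_cells_succ_left h hlt)
          (by simp [mem_twoRowDiagram])]
    · have hempty : {f | IsSYT μ f ∧ f (0, b) = μ.card} = ∅ := by
        refine Set.eq_empty_of_forall_notMem fun f ⟨hf, h0⟩ => ?_
        have hcol : f (0, b) < f (1, b) := hf.2.2.1 0 b hmem1
        have := hf.le_card hmem1
        omega
      rw [hempty, twoRowSYT_eq_empty (Nat.lt_succ_self _)]
  have hb : b ≤ a + 1 := by omega
  rw [twoRowSYT_eq h, hsplit, Set.ncard_union_eq hdisj (hfin.subset fun _ => And.left)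
    (hfin.subset fun _ => And.left), htop, twoRowSYT_eq hb,
    ncard_setOf_isSYT_apply_eq_card (twoRowDiagram_cells_succ_right h hb)
      (by simp [mem_twoRowDiagram])]

end TwoRows

def ballot (a b : ℕ) : ℤ :=
  (a + b).choose a - (a + b).choose (a + 1)

lemma ballot_zero_right (a : ℕ) : ballot a 0 = 1 := by
  simp [ballot]

lemma ballot_self_succ (a : ℕ) : ballot a (a + 1) = 0 := by
  rw [ballot, show a + (a + 1) = 2 * a + 1 by ring, Nat.choose_symm_half, sub_self]

lemma ballot_succ_succ (a b : ℕ) :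
    ballot (a + 1) (b + 1) = ballot a (b + 1) + ballot (a + 1) b := by
  rw [ballot, ballot, ballot, show a + 1 + (b + 1) = a + b + 1 + 1 by ring,
    show a + (b + 1) = a + b + 1 by ring, show a + 1 + b = a + b + 1 by ring,
    Nat.choose_succ_succ' (a + b + 1) a, Nat.choose_succ_succ' (a + b + 1) (a + 1)]
  push_cast
  ring

lemma ballot_eq_choose_mul_div (a b : ℕ) :
    (ballot a b : ℚ) = (a + b).choose a * ((a : ℚ) - b + 1) / (a + 1) := by
  have hpascal : ((a + b).choose (a + 1) : ℚ) * (a + 1) = (a + b).choose a * b := by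
    have := Nat.choose_succ_right_eq (a + b) a
    rw [Nat.add_sub_cancel_left] at this
    exact_mod_cast this
  rw [ballot, eq_div_iff (by positivity)]
  push_cast
  linear_combination -hpascal

theorem ncard_twoRowSYT {a b : ℕ} (h : b ≤ a + 1) :
    ((twoRowSYT a b).ncard : ℤ) = ballot a b := by
  induction a generalizing b with
  | zero =>
    interval_cases b
    · simp [twoRowSYT_zero_zero, ballot]
    · rw [twoRowSYT_eq_empty zero_lt_one, ballot_self_succ, Set.ncard_empty, Nat.cast_zero]
  | succ a iha =>
    induction b with
    | zero =>
      rw [ncard_twoRowSYT_succ_zero, iha (Nat.zero_le _), ballot_zero_right, ballot_zero_right]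
    | succ b ihb =>
      rcases (Nat.le_of_succ_le_succ h).lt_or_eq with hlt | rfl
      · rw [ncard_twoRowSYT_succ_succ (by omega), Nat.cast_add, iha (by omega), ihb (by omega),
          ballot_succ_succ]
      · rw [twoRowSYT_eq_empty (Nat.lt_succ_self _), ballot_self_succ, Set.ncard_empty,
          Nat.cast_zero]

/-- The number of standard Young tableaux of the two-row shape `(r1, r2)` with
`r1 + r2 = N`, `r1 ≥ r2`, equals `binom(N, r1)·(2r1 − N + 1)/(r1 + 1)`
(the hook-length formula for two-row shapes). -/
theorem card_SYT_two_rows (N r1 r2 : ℕ) (h21 : r2 ≤ r1) (hsum : r1 + r2 = N) :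
    (Set.ncard {f : ℕ × ℕ → ℕ | IsSYT (twoRowDiagram r1 r2 h21) f} : ℚ)
      = (N.choose r1 : ℚ) * (2 * (r1 : ℚ) - (N : ℚ) + 1) / ((r1 : ℚ) + 1) := by
  subst hsum
  have hcount := ncard_twoRowSYT (Nat.le_succ_of_le h21)
  rw [twoRowSYT_eq h21] at hcount
  rw [← Int.cast_natCast, hcount, ballot_eq_choose_mul_div]
  push_cast
  ring
end

section
/- With the amplitude-rebalancing projectors Π_w = |0_w⟩⟨0_w| + |1_w⟩⟨1_w| and Π̄_w = |0̄_w⟩⟨0̄_w| + |1̄_w⟩⟨1̄_w|, and input |ψ⟩ = cosθ |0_L⟩ + e^{iφ} sinθ |1_L⟩, the projection probabilities are ‖Π_w|ψ⟩‖² = 3/4 + (w/4)cos2θ and ‖Π̄_w|ψ⟩‖² = 1/4 − (w/4)cos2θ; in particular for |w| ≤ 1/2 the success probability ‖Π_w|ψ⟩‖² ≥ 5/8. -/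
/-!
Both projectors act blockwise on `span {|0_L⟩, |0'_L⟩} ⊕ span {|1_L⟩, |1'_L⟩}`, keeping one unit
vector of each block, and `|ψ⟩` has one component in each block. Hence each projection probability
is `|⟨0_w|0_L⟩|² cos²θ + |⟨1_w|1_L⟩|² sin²θ` (resp. with the barred vectors), i.e.
`((3 + w) cos²θ + (3 - w) sin²θ) / 4`, which is linear in `cos 2θ`; `|w cos 2θ| ≤ 1/2` then gives
the lower bound.
-/

open scoped InnerProductSpace ComplexConjugate

section Blocks

variable {𝕜 E : Type*} [RCLike 𝕜] [NormedAddCommGroup E] [InnerProductSpace 𝕜 E]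

theorem orthonormal_pair_iff {x y : E} :
    Orthonormal 𝕜 ![x, y] ↔ ‖x‖ = 1 ∧ ‖y‖ = 1 ∧ ⟪x, y⟫_𝕜 = 0 := by
  simp [and_comm, and_left_comm]

theorem Orthonormal.norm_smul_add_smul_sq {x y : E} (h : Orthonormal 𝕜 ![x, y]) (a b : 𝕜) :
    ‖a • x + b • y‖ ^ 2 = ‖a‖ ^ 2 + ‖b‖ ^ 2 := by
  obtain ⟨hx, hy, hxy⟩ := orthonormal_pair_iff.mp h
  have horth : ⟪a • x, b • y⟫_𝕜 = 0 := by simp [inner_smul_left, inner_smul_right, hxy]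
  simp [norm_add_sq (𝕜 := 𝕜), horth, norm_smul, hx, hy]

theorem Orthonormal.norm_smul_add_smul_eq_one {x y : E} (h : Orthonormal 𝕜 ![x, y]) {a b : 𝕜}
    (hab : ‖a‖ ^ 2 + ‖b‖ ^ 2 = 1) : ‖a • x + b • y‖ = 1 := by
  rw [← pow_eq_one_iff_of_nonneg (norm_nonneg _) two_ne_zero, h.norm_smul_add_smul_sq, hab]

variable {u₀ u₀' u₁ u₁' : E} (h : Orthonormal 𝕜 ![u₀, u₀', u₁, u₁'])
include h

theorem Orthonormal.smul_add_smul_blocks {a b c d : 𝕜} (hab : ‖a‖ ^ 2 + ‖b‖ ^ 2 = 1)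
    (hcd : ‖c‖ ^ 2 + ‖d‖ ^ 2 = 1) :
    Orthonormal 𝕜 ![a • u₀ + b • u₀', c • u₁ + d • u₁'] := by
  have h₀ : Orthonormal 𝕜 ![u₀, u₀'] := orthonormal_pair_iff.mpr
    ⟨h.norm_eq_one 0, h.norm_eq_one 1, h.inner_eq_zero (i := 0) (j := 1) (by decide)⟩
  have h₁ : Orthonormal 𝕜 ![u₁, u₁'] := orthonormal_pair_iff.mpr
    ⟨h.norm_eq_one 2, h.norm_eq_one 3, h.inner_eq_zero (i := 2) (j := 3) (by decide)⟩
  have h₀₁ : ⟪u₀, u₁⟫_𝕜 = 0 := h.inner_eq_zero (i := 0) (j := 2) (by decide)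
  have h₀₁' : ⟪u₀, u₁'⟫_𝕜 = 0 := h.inner_eq_zero (i := 0) (j := 3) (by decide)
  have h₀'₁ : ⟪u₀', u₁⟫_𝕜 = 0 := h.inner_eq_zero (i := 1) (j := 2) (by decide)
  have h₀'₁' : ⟪u₀', u₁'⟫_𝕜 = 0 := h.inner_eq_zero (i := 1) (j := 3) (by decide)
  refine orthonormal_pair_iff.mpr
    ⟨h₀.norm_smul_add_smul_eq_one hab, h₁.norm_smul_add_smul_eq_one hcd, ?_⟩
  simp [inner_add_left, inner_add_right, inner_smul_left, inner_smul_right, *]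

theorem Orthonormal.inner_first_block (a b α β : 𝕜) :
    ⟪a • u₀ + b • u₀', α • u₀ + β • u₁⟫_𝕜 = conj a * α := by
  have h₀ : ‖u₀‖ = 1 := h.norm_eq_one 0
  have h₀'₀ : ⟪u₀', u₀⟫_𝕜 = 0 := h.inner_eq_zero (i := 1) (j := 0) (by decide)
  have h₀₁ : ⟪u₀, u₁⟫_𝕜 = 0 := h.inner_eq_zero (i := 0) (j := 2) (by decide)
  have h₀'₁ : ⟪u₀', u₁⟫_𝕜 = 0 := h.inner_eq_zero (i := 1) (j := 2) (by decide)
  simp [inner_add_left, inner_add_right, inner_smul_left, inner_smul_right,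
    inner_self_eq_norm_sq_to_K, *, mul_comm]

theorem Orthonormal.inner_second_block (c d α β : 𝕜) :
    ⟪c • u₁ + d • u₁', α • u₀ + β • u₁⟫_𝕜 = conj c * β := by
  have h₁ : ‖u₁‖ = 1 := h.norm_eq_one 2
  have h₁₀ : ⟪u₁, u₀⟫_𝕜 = 0 := h.inner_eq_zero (i := 2) (j := 0) (by decide)
  have h₁'₀ : ⟪u₁', u₀⟫_𝕜 = 0 := h.inner_eq_zero (i := 3) (j := 0) (by decide)
  have h₁'₁ : ⟪u₁', u₁⟫_𝕜 = 0 := h.inner_eq_zero (i := 3) (j := 2) (by decide)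
  simp [inner_add_left, inner_add_right, inner_smul_left, inner_smul_right,
    inner_self_eq_norm_sq_to_K, *, mul_comm]

theorem Orthonormal.norm_sq_projection_blocks {a b c d : 𝕜} (hab : ‖a‖ ^ 2 + ‖b‖ ^ 2 = 1)
    (hcd : ‖c‖ ^ 2 + ‖d‖ ^ 2 = 1) (α β : 𝕜) :
    ‖⟪a • u₀ + b • u₀', α • u₀ + β • u₁⟫_𝕜 • (a • u₀ + b • u₀') +
        ⟪c • u₁ + d • u₁', α • u₀ + β • u₁⟫_𝕜 • (c • u₁ + d • u₁')‖ ^ 2 =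
      ‖a‖ ^ 2 * ‖α‖ ^ 2 + ‖c‖ ^ 2 * ‖β‖ ^ 2 := by
  rw [(h.smul_add_smul_blocks hab hcd).norm_smul_add_smul_sq, h.inner_first_block,
    h.inner_second_block, norm_mul, norm_mul, RCLike.norm_conj, RCLike.norm_conj, mul_pow, mul_pow]

end Blocks

theorem Complex.norm_inv_two_mul_sqrt_sq {x : ℝ} (hx : 0 ≤ x) :
    ‖(2 : ℂ)⁻¹ * (√x : ℂ)‖ ^ 2 = x / 4 := by
  rw [norm_mul, norm_inv, Complex.norm_ofNat, Complex.norm_real,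
    Real.norm_of_nonneg (Real.sqrt_nonneg x), mul_pow, Real.sq_sqrt hx]
  ring

theorem mul_cos_sq_add_mul_sin_sq (p q θ : ℝ) :
    p * Real.cos θ ^ 2 + q * Real.sin θ ^ 2 = (p + q) / 2 + (p - q) / 2 * Real.cos (2 * θ) := by
  rw [Real.cos_two_mul]
  linear_combination q * Real.sin_sq_add_cos_sq θ

open scoped ComplexInnerProductSpace in
/-- With the amplitude-rebalancing projectors `Π_w` and `Π̄_w` applied to
`|ψ⟩ = cos θ |0_L⟩ + e^{iφ} sin θ |1_L⟩`, the projection probabilities are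
`3/4 + (w/4)cos 2θ` and `1/4 − (w/4)cos 2θ`; the first is at least `5/8` for `|w| ≤ 1/2`. -/
theorem rebalancing_projection_probabilities
    {E : Type*} [NormedAddCommGroup E] [InnerProductSpace ℂ E]
    (u0 u0' u1 u1' : E) (h : Orthonormal ℂ ![u0, u0', u1, u1'])
    (w θ φ : ℝ) (hw : |w| ≤ 1 / 2)
    (z0 z1 zb0 zb1 ψ : E)
    (hz0 : z0 = (2 : ℂ)⁻¹ • ((Real.sqrt (3 + w) : ℂ) • u0 + (Real.sqrt (1 - w) : ℂ) • u0'))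
    (hz1 : z1 = (2 : ℂ)⁻¹ • ((Real.sqrt (3 - w) : ℂ) • u1 + (Real.sqrt (1 + w) : ℂ) • u1'))
    (hzb0 : zb0 = (2 : ℂ)⁻¹ • ((Real.sqrt (1 - w) : ℂ) • u0 - (Real.sqrt (3 + w) : ℂ) • u0'))
    (hzb1 : zb1 = (2 : ℂ)⁻¹ • ((Real.sqrt (1 + w) : ℂ) • u1 - (Real.sqrt (3 - w) : ℂ) • u1'))
    (hψ : ψ = (Real.cos θ : ℂ) • u0 + (Complex.exp (φ * Complex.I) * Real.sin θ) • u1) :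
    ‖⟪z0, ψ⟫ • z0 + ⟪z1, ψ⟫ • z1‖ ^ 2 = 3 / 4 + (w / 4) * Real.cos (2 * θ) ∧
    ‖⟪zb0, ψ⟫ • zb0 + ⟪zb1, ψ⟫ • zb1‖ ^ 2 = 1 / 4 - (w / 4) * Real.cos (2 * θ) ∧
    (5 : ℝ) / 8 ≤ ‖⟪z0, ψ⟫ • z0 + ⟪z1, ψ⟫ • z1‖ ^ 2 := by
  obtain ⟨hwl, hwr⟩ := abs_le.mp hw
  have n₀ := Complex.norm_inv_two_mul_sqrt_sq (x := 3 + w) (by linarith)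
  have n₁ := Complex.norm_inv_two_mul_sqrt_sq (x := 3 - w) (by linarith)
  have n₂ := Complex.norm_inv_two_mul_sqrt_sq (x := 1 - w) (by linarith)
  have n₃ := Complex.norm_inv_two_mul_sqrt_sq (x := 1 + w) (by linarith)
  have hcos : ‖(Real.cos θ : ℂ)‖ ^ 2 = Real.cos θ ^ 2 := by
    rw [Complex.norm_real, Real.norm_eq_abs, sq_abs]
  have hsin : ‖Complex.exp (φ * Complex.I) * Real.sin θ‖ ^ 2 = Real.sin θ ^ 2 := by
    rw [norm_mul, Complex.norm_exp_ofReal_mul_I, one_mul, Complex.norm_real, Real.norm_eq_abs,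
      sq_abs]
  rw [smul_add, smul_smul, smul_smul] at hz0 hz1
  rw [smul_sub, smul_smul, smul_smul, sub_eq_add_neg, ← neg_smul] at hzb0 hzb1
  have hP : ‖⟪z0, ψ⟫ • z0 + ⟪z1, ψ⟫ • z1‖ ^ 2 = 3 / 4 + (w / 4) * Real.cos (2 * θ) := by
    rw [hz0, hz1, hψ, h.norm_sq_projection_blocks (by rw [n₀, n₂]; ring) (by rw [n₁, n₃]; ring),
      n₀, n₁, hcos, hsin, mul_cos_sq_add_mul_sin_sq]
    ring
  have hQ : ‖⟪zb0, ψ⟫ • zb0 + ⟪zb1, ψ⟫ • zb1‖ ^ 2 = 1 / 4 - (w / 4) * Real.cos (2 * θ) := by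
    rw [hzb0, hzb1, hψ, h.norm_sq_projection_blocks (by rw [norm_neg, n₀, n₂]; ring)
      (by rw [norm_neg, n₁, n₃]; ring), n₂, n₃, hcos, hsin, mul_cos_sq_add_mul_sin_sq]
    ring
  refine ⟨hP, hQ, hP ▸ ?_⟩
  nlinarith [mul_nonneg (sub_nonneg.2 hwr) (sub_nonneg.2 (Real.cos_le_one (2 * θ))),
    mul_nonneg (neg_le_iff_add_nonneg.1 hwl)
      (neg_le_iff_add_nonneg.1 (Real.neg_one_le_cos (2 * θ)))]
end
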